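/- arXiv:1809.09044 — 4 statements merged into one kernel-verified Lean document; each statement's English description precedes it below -/
import Mathlib

section
/- Let k ≥ 1 and let G = Fin (2k) × Fin (2k) be the grid of shares of a 2k × 2k extended matrix. For a set U ⊆ G of unavailable cells, let U' = G \ R(U) be the complement of the recoverable closure. Then every row of the grid contains either zero cells of U' or at least k+1 cells of U', and likewise every column of the grid contains either zero cells of U' or at least k+1 cells of U'. -/
/-- The recoverable closure `Rec k U` of a set `U` of unavailable cells of the
`2k × 2k` grid: the smallest set of cells containing all available cells (those
not in `U`) and closed under row recovery (if at least `k` cells of a row are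
recoverable then every cell of that row is recoverable) and column recovery
(if at least `k` cells of a column are recoverable then every cell of that
column is recoverable). -/
inductive Rec (k : ℕ) (U : Set (Fin (2*k) × Fin (2*k))) : Fin (2*k) × Fin (2*k) → Prop
  | base (x : Fin (2*k) × Fin (2*k)) : x ∉ U → Rec k U x
  | row (r c : Fin (2*k)) (V : Finset (Fin (2*k))) :
      k ≤ V.card → (∀ j ∈ V, Rec k U (r, j)) → Rec k U (r, c)
  | col (r c : Fin (2*k)) (V : Finset (Fin (2*k))) :
      k ≤ V.card → (∀ i ∈ V, Rec k U (i, c)) → Rec k U (r, c)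

open Classical in
lemma aux_filter (k : ℕ) (P : Fin (2*k) → Prop)
    (h : {j : Fin (2*k) | ¬ P j}.ncard ≤ k) :
    k ≤ (Finset.univ.filter P).card := by
  classical
  have h1 : {j : Fin (2*k) | ¬ P j}.ncard
      = (Finset.univ.filter (fun j => ¬ P j)).card := by
    rw [Set.ncard_eq_toFinset_card']
    congr 1
    ext j
    simp
  have h2 : (Finset.univ.filter P).card + (Finset.univ.filter (fun j => ¬ P j)).card
      = 2*k := by
    rw [Finset.card_filter_add_card_filter_not]
    simp
  omega

/-- Every row of the grid contains either zero or at least `k+1` cells of the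
complement `G \ R(U)` of the recoverable closure, and likewise for columns. -/
theorem stmt0 (k : ℕ) (hk : 1 ≤ k) (U : Set (Fin (2*k) × Fin (2*k))) :
    (∀ r : Fin (2*k),
      {c : Fin (2*k) | ¬ Rec k U (r, c)} = ∅ ∨
        k + 1 ≤ {c : Fin (2*k) | ¬ Rec k U (r, c)}.ncard) ∧
    (∀ c : Fin (2*k),
      {r : Fin (2*k) | ¬ Rec k U (r, c)} = ∅ ∨
        k + 1 ≤ {r : Fin (2*k) | ¬ Rec k U (r, c)}.ncard) := by
  classical
  constructor
  · intro r
    by_cases h : k + 1 ≤ {c : Fin (2*k) | ¬ Rec k U (r, c)}.ncard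
    · exact Or.inr h
    · left
      have hle : {c : Fin (2*k) | ¬ Rec k U (r, c)}.ncard ≤ k := by omega
      have hcard := aux_filter k (fun c => Rec k U (r, c)) hle
      ext c
      simp only [Set.mem_setOf_eq, Set.mem_empty_iff_false, iff_false, not_not]
      exact Rec.row r c _ hcard (fun j hj => (Finset.mem_filter.mp hj).2)
  · intro c
    by_cases h : k + 1 ≤ {r : Fin (2*k) | ¬ Rec k U (r, c)}.ncard
    · exact Or.inr h
    · left
      have hle : {r : Fin (2*k) | ¬ Rec k U (r, c)}.ncard ≤ k := by omega
      have hcard := aux_filter k (fun r => Rec k U (r, c)) hle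
      ext r
      simp only [Set.mem_setOf_eq, Set.mem_empty_iff_false, iff_false, not_not]
      exact Rec.col r c _ hcard (fun i hi => (Finset.mem_filter.mp hi).2)
end

section
/- Let k ≥ 1 and let G = Fin (2k) × Fin (2k). If a set U ⊆ G of unavailable cells is unrecoverable (i.e., R(U) ≠ G), then there exist at least k+1 distinct rows each containing at least k+1 cells of G \ R(U), and at least k+1 distinct columns each containing at least k+1 cells of G \ R(U); consequently, since G \ R(U) ⊆ U, the cardinality of U is at least (k+1)². -/
open Classical in
/-- A bad cell forces at least `k+1` bad cells in its row. -/
lemma key_row (k : ℕ) (U : Set (Fin (2*k) × Fin (2*k))) (r c : Fin (2*k))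
    (h : ¬ Rec k U (r, c)) :
    k + 1 ≤ (Finset.univ.filter (fun j => ¬ Rec k U (r, j))).card := by
  by_contra hlt
  push_neg at hlt
  have hsum := Finset.card_filter_add_card_filter_not
    (s := (Finset.univ : Finset (Fin (2*k)))) (p := fun j => Rec k U (r, j))
  simp only [Finset.card_univ, Fintype.card_fin] at hsum
  have hrec : k ≤ (Finset.univ.filter (fun j => Rec k U (r, j))).card := by omega
  exact h (Rec.row r c _ hrec (fun j hj => (Finset.mem_filter.mp hj).2))

open Classical in
/-- A bad cell forces at least `k+1` bad cells in its column. -/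
lemma key_col (k : ℕ) (U : Set (Fin (2*k) × Fin (2*k))) (r c : Fin (2*k))
    (h : ¬ Rec k U (r, c)) :
    k + 1 ≤ (Finset.univ.filter (fun i => ¬ Rec k U (i, c))).card := by
  by_contra hlt
  push_neg at hlt
  have hsum := Finset.card_filter_add_card_filter_not
    (s := (Finset.univ : Finset (Fin (2*k)))) (p := fun i => Rec k U (i, c))
  simp only [Finset.card_univ, Fintype.card_fin] at hsum
  have hrec : k ≤ (Finset.univ.filter (fun i => Rec k U (i, c))).card := by omega
  exact h (Rec.col r c _ hrec (fun i hi => (Finset.mem_filter.mp hi).2))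

/-- If `U` is unrecoverable (`R(U) ≠ G`), then at least `k+1` distinct rows each
contain at least `k+1` cells of `G \ R(U)`, at least `k+1` distinct columns each
contain at least `k+1` cells of `G \ R(U)`, and consequently `|U| ≥ (k+1)²`. -/
theorem stmt1 (k : ℕ) (hk : 1 ≤ k) (U : Set (Fin (2*k) × Fin (2*k)))
    (hU : ¬ ∀ x : Fin (2*k) × Fin (2*k), Rec k U x) :
    (∃ A : Finset (Fin (2*k)), k + 1 ≤ A.card ∧
      ∀ r ∈ A, k + 1 ≤ {c : Fin (2*k) | ¬ Rec k U (r, c)}.ncard) ∧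
    (∃ B : Finset (Fin (2*k)), k + 1 ≤ B.card ∧
      ∀ c ∈ B, k + 1 ≤ {r : Fin (2*k) | ¬ Rec k U (r, c)}.ncard) ∧
    (k + 1) ^ 2 ≤ U.ncard := by
  classical
  push_neg at hU
  obtain ⟨⟨r0, c0⟩, hbad⟩ := hU
  -- ncard-to-Finset conversions
  have hrow_ncard : ∀ r : Fin (2*k), {c : Fin (2*k) | ¬ Rec k U (r, c)}.ncard
      = (Finset.univ.filter (fun j => ¬ Rec k U (r, j))).card := by
    intro r
    rw [show {c : Fin (2*k) | ¬ Rec k U (r, c)}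
        = ↑(Finset.univ.filter (fun j => ¬ Rec k U (r, j))) by ext; simp]
    exact Set.ncard_coe_finset _
  have hcol_ncard : ∀ c : Fin (2*k), {r : Fin (2*k) | ¬ Rec k U (r, c)}.ncard
      = (Finset.univ.filter (fun i => ¬ Rec k U (i, c))).card := by
    intro c
    rw [show {r : Fin (2*k) | ¬ Rec k U (r, c)}
        = ↑(Finset.univ.filter (fun i => ¬ Rec k U (i, c))) by ext; simp]
    exact Set.ncard_coe_finset _
  set A : Finset (Fin (2*k)) := Finset.univ.filter (fun r => ∃ c, ¬ Rec k U (r, c)) with hA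
  set B : Finset (Fin (2*k)) := Finset.univ.filter (fun c => ∃ r, ¬ Rec k U (r, c)) with hB
  have hAcard : k + 1 ≤ A.card := by
    refine le_trans (key_col k U r0 c0 hbad) (Finset.card_le_card ?_)
    intro i hi
    exact Finset.mem_filter.mpr ⟨Finset.mem_univ _, ⟨c0, (Finset.mem_filter.mp hi).2⟩⟩
  have hBcard : k + 1 ≤ B.card := by
    refine le_trans (key_row k U r0 c0 hbad) (Finset.card_le_card ?_)
    intro j hj
    exact Finset.mem_filter.mpr ⟨Finset.mem_univ _, ⟨r0, (Finset.mem_filter.mp hj).2⟩⟩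
  have hArows : ∀ r ∈ A, k + 1 ≤ {c : Fin (2*k) | ¬ Rec k U (r, c)}.ncard := by
    intro r hr
    simp only [hA, Finset.mem_filter, Finset.mem_univ, true_and] at hr
    obtain ⟨c, hc⟩ := hr
    rw [hrow_ncard]
    exact key_row k U r c hc
  have hBcols : ∀ c ∈ B, k + 1 ≤ {r : Fin (2*k) | ¬ Rec k U (r, c)}.ncard := by
    intro c hc
    simp only [hB, Finset.mem_filter, Finset.mem_univ, true_and] at hc
    obtain ⟨r, hr⟩ := hc
    rw [hcol_ncard]
    exact key_col k U r c hr
  refine ⟨⟨A, hAcard, hArows⟩, ⟨B, hBcard, hBcols⟩, ?_⟩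
  -- cardinality bound
  set Bad : Finset (Fin (2*k) × Fin (2*k)) :=
    Finset.univ.filter (fun x => ¬ Rec k U x) with hBadDef
  have hBadU : (↑Bad : Set (Fin (2*k) × Fin (2*k))) ⊆ U := by
    intro x hx
    simp only [hBadDef, Finset.coe_filter, Set.mem_setOf_eq, Finset.mem_univ, true_and] at hx
    by_contra hxU
    exact hx (Rec.base x hxU)
  have hsub : A.biUnion (fun r => {r} ×ˢ Finset.univ.filter (fun j => ¬ Rec k U (r, j))) ⊆ Bad := by
    intro x hx
    simp only [Finset.mem_biUnion, Finset.mem_product, Finset.mem_singleton,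
      Finset.mem_filter, Finset.mem_univ, true_and] at hx
    obtain ⟨r, _, hx1, hx2⟩ := hx
    simp only [hBadDef, Finset.mem_filter, Finset.mem_univ, true_and]
    rw [show x = (x.1, x.2) from rfl, hx1]
    exact hx2
  have hdisj : (A : Set (Fin (2*k))).PairwiseDisjoint
      (fun r => {r} ×ˢ Finset.univ.filter (fun j => ¬ Rec k U (r, j))) := by
    intro r _ s _ hrs
    apply Finset.disjoint_left.mpr
    intro x hx hx'
    simp only [Finset.mem_product, Finset.mem_singleton] at hx hx'
    exact hrs (hx.1.symm.trans hx'.1)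
  have hcount : (k+1) * (k+1) ≤ Bad.card := by
    calc (k+1) * (k+1) ≤ A.card * (k+1) := Nat.mul_le_mul_right _ hAcard
    _ = ∑ _r ∈ A, (k+1) := by rw [Finset.sum_const, smul_eq_mul]
    _ ≤ ∑ r ∈ A, ({r} ×ˢ Finset.univ.filter (fun j => ¬ Rec k U (r, j))).card := by
        refine Finset.sum_le_sum (fun r hr => ?_)
        rw [Finset.card_product, Finset.card_singleton, one_mul]
        have := hArows r hr
        rwa [hrow_ncard] at this
    _ = (A.biUnion (fun r => {r} ×ˢ Finset.univ.filter (fun j => ¬ Rec k U (r, j)))).card :=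
        (Finset.card_biUnion hdisj).symm
    _ ≤ Bad.card := Finset.card_le_card hsub
  have hBadle : Bad.card ≤ U.ncard := by
    rw [← Set.ncard_coe_finset]
    exact Set.ncard_le_ncard hBadU (Set.toFinite U)
  calc (k+1)^2 = (k+1)*(k+1) := by ring
  _ ≤ Bad.card := hcount
  _ ≤ U.ncard := hBadle
end

section
/- Let k ≥ 1 and let G = Fin (2k) × Fin (2k). For any set A of rows with |A| = k+1 and any set B of columns with |B| = k+1, the set U = A ×ˢ B (the combinatorial rectangle of all cells whose row is in A and column is in B) has cardinality exactly (k+1)² and is unrecoverable, i.e., R(U) = G \ U ≠ G. Hence the bound (k+1)² of Theorem 1 is attained. -/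
/-- For any `k+1` rows `A` and any `k+1` columns `B`, the combinatorial
rectangle `U = A ×ˢ B` has exactly `(k+1)²` cells, its recoverable closure is
exactly `G \ U`, and `U` is unrecoverable, i.e. `R(U) ≠ G`. -/
theorem stmt2 (k : ℕ) (hk : 1 ≤ k) (A B : Finset (Fin (2*k)))
    (hA : A.card = k + 1) (hB : B.card = k + 1) :
    (A ×ˢ B).card = (k + 1) ^ 2 ∧
    (∀ x : Fin (2*k) × Fin (2*k),
      Rec k (↑(A ×ˢ B) : Set (Fin (2*k) × Fin (2*k))) x ↔ x ∉ A ×ˢ B) ∧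
    ¬ ∀ x : Fin (2*k) × Fin (2*k),
        Rec k (↑(A ×ˢ B) : Set (Fin (2*k) × Fin (2*k))) x := by
  have key : ∀ x, Rec k (↑(A ×ˢ B) : Set (Fin (2*k) × Fin (2*k))) x → x ∉ A ×ˢ B := by
    intro x hx
    induction hx with
    | base x hx => simpa using hx
    | row r c V hV hrec ih =>
        intro hmem
        have hr : r ∈ A := (Finset.mem_product.mp hmem).1
        have hsub : V ⊆ Bᶜ := by
          intro j hj
          have := ih j hj
          simp only [Finset.mem_product] at this
          simp only [Finset.mem_compl]
          tauto
        have hcard : V.card ≤ Bᶜ.card := Finset.card_le_card hsub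
        have : Bᶜ.card = 2*k - (k+1) := by
          rw [Finset.card_compl, hB]; simp
        omega
    | col r c V hV hrec ih =>
        intro hmem
        have hc : c ∈ B := (Finset.mem_product.mp hmem).2
        have hsub : V ⊆ Aᶜ := by
          intro i hi
          have := ih i hi
          simp only [Finset.mem_product] at this
          simp only [Finset.mem_compl]
          tauto
        have hcard : V.card ≤ Aᶜ.card := Finset.card_le_card hsub
        have : Aᶜ.card = 2*k - (k+1) := by
          rw [Finset.card_compl, hA]; simp
        omega
  refine ⟨by rw [Finset.card_product, hA, hB, sq], fun x => ⟨key x, fun h => Rec.base x (by simpa using h)⟩, ?_⟩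
  intro hall
  obtain ⟨a, ha⟩ := Finset.card_pos.mp (by omega : 0 < A.card)
  obtain ⟨b, hb⟩ := Finset.card_pos.mp (by omega : 0 < B.card)
  exact key (a, b) (hall (a, b)) (Finset.mem_product.mpr ⟨ha, hb⟩)
end

section
/- (Euler; coupon collector's problem with group drawings.) Let n, s, c, λ be natural numbers with 0 < s ≤ n and λ ≤ n. Let S₁, …, S_c be independent random variables, each uniformly distributed on the s-element subsets of an n-element set. Then the probability that the union S₁ ∪ ⋯ ∪ S_c has cardinality at least n − λ equals 1 − Σ_{i=1}^{n−λ} (−1)^{i−1} · C(λ+i−1, λ) · C(n, λ+i) · (C(n−λ−i, s)/C(n, s))^c, where C denotes the binomial coefficient with C(a, b) = 0 for b > a (so the sum is finite, terms with λ + i > n vanishing). -/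
/-! The tuples that miss more than `lam` points are counted by inclusion–exclusion. For a set of
size `m`, `∑_{i ≥ 1} (-1)^(i-1) C(lam+i-1, lam) C(m, lam+i)` is `1` if `lam < m` and `0` otherwise
(induction on `m` via Pascal's rule, the increment being `C(m, lam) ∑_k (-1)^k C(m-lam, k)`).
Summing `C(#missed, j)` over the tuples counts the pairs (tuple, `j`-set `J` it misses), and each
`J` is missed by exactly `C(n - j, s)^c` tuples. -/

open Finset

section AlternatingSums

variable {R : Type*} [CommRing R]

theorem sum_range_neg_one_pow_mul_choose_of_lt {m K : ℕ} (h : m < K) :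
    ∑ k ∈ range K, (-1 : R) ^ k * m.choose k = if m = 0 then 1 else 0 := by
  have hvanish : ∀ k ∈ range K, k ∉ range (m + 1) → (-1 : R) ^ k * m.choose k = 0 := by
    intro k _ hk
    rw [Nat.choose_eq_zero_of_lt (by simpa using hk), Nat.cast_zero, mul_zero]
  rw [← sum_subset (range_subset_range.2 h) hvanish]
  exact_mod_cast congrArg (Int.cast (R := R)) Int.alternating_sum_range_choose

theorem sum_range_neg_one_pow_mul_choose_mul_choose_add {l m K : ℕ} (h : m < l + K) :
    ∑ k ∈ range K, (-1 : R) ^ k * (l + k).choose l * m.choose (l + k) =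
      if m = l then 1 else 0 := by
  have hterm : ∀ k ∈ range K, (-1 : R) ^ k * (l + k).choose l * m.choose (l + k) =
      m.choose l * ((-1 : R) ^ k * (m - l).choose k) := by
    intro k _
    have := congrArg (Nat.cast (R := R)) (Nat.choose_mul (n := m) (Nat.le_add_right l k))
    rw [Nat.add_sub_cancel_left] at this
    push_cast at this
    linear_combination (-1 : R) ^ k * this
  rw [sum_congr rfl hterm, ← mul_sum]
  rcases lt_trichotomy m l with hlt | rfl | hgt
  · simp [Nat.choose_eq_zero_of_lt hlt, hlt.ne]
  · rw [sum_range_neg_one_pow_mul_choose_of_lt (by omega)]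
    simp
  · rw [sum_range_neg_one_pow_mul_choose_of_lt (by omega)]
    simp [hgt.ne', Nat.sub_ne_zero_of_lt hgt]

theorem sum_range_neg_one_pow_mul_choose_mul_choose_add_succ {l m K : ℕ} (h : m ≤ l + K) :
    ∑ k ∈ range K, (-1 : R) ^ k * (l + k).choose l * m.choose (l + k + 1) =
      if l < m then 1 else 0 := by
  induction m with
  | zero => simp
  | succ m ih =>
    simp only [Nat.choose_succ_succ', Nat.cast_add, mul_add, sum_add_distrib,
      sum_range_neg_one_pow_mul_choose_mul_choose_add (by omega : m < l + K), ih (by omega)]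
    split_ifs <;> first | (exfalso; omega) | norm_num

theorem sum_Icc_neg_one_pow_mul_choose_mul_choose {l m N : ℕ} (h : m ≤ l + N) :
    ∑ i ∈ Icc 1 N, (-1 : R) ^ (i - 1) * (l + i - 1).choose l * m.choose (l + i) =
      if l < m then 1 else 0 := by
  rw [← sum_range_neg_one_pow_mul_choose_mul_choose_add_succ h, ← Ico_add_one_right_eq_Icc,
    sum_Ico_eq_sum_range, Nat.add_sub_cancel]
  refine sum_congr rfl fun k _ => ?_
  rw [show 1 + k - 1 = k by omega, show l + (1 + k) - 1 = l + k by omega,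
    show l + (1 + k) = l + k + 1 by omega]

end AlternatingSums

theorem sum_card_filter_subset_eq_sum_choose {α β : Type*} [Fintype α] [DecidableEq α]
    (Ω : Finset β) (M : β → Finset α) (j : ℕ) :
    ∑ J ∈ powersetCard j univ, #{x ∈ Ω | J ⊆ M x} = ∑ x ∈ Ω, (#(M x)).choose j := by
  refine (sum_card_bipartiteAbove_eq_sum_card_bipartiteBelow (fun J x => J ⊆ M x)).trans
    (sum_congr rfl fun x _ => ?_)
  rw [← card_powersetCard]
  congr 1
  ext J
  simp [bipartiteBelow, mem_powersetCard, and_comm]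

theorem card_filter_lt_card_eq_sum {R : Type*} [CommRing R] {α β : Type*} [Fintype α]
    [DecidableEq α] (Ω : Finset β) (M : β → Finset α) (l : ℕ) :
    (#{x ∈ Ω | l < #(M x)} : R) = ∑ i ∈ Icc 1 (Fintype.card α - l),
      (-1 : R) ^ (i - 1) * (l + i - 1).choose l *
        ∑ J ∈ powersetCard (l + i) univ, (#{x ∈ Ω | J ⊆ M x} : R) := by
  calc (#{x ∈ Ω | l < #(M x)} : R)
      = ∑ x ∈ Ω, if l < #(M x) then (1 : R) else 0 := by
        rw [card_filter]; push_cast; rfl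
    _ = ∑ x ∈ Ω, ∑ i ∈ Icc 1 (Fintype.card α - l),
          (-1 : R) ^ (i - 1) * (l + i - 1).choose l * (#(M x)).choose (l + i) := by
        refine sum_congr rfl fun x _ => (sum_Icc_neg_one_pow_mul_choose_mul_choose ?_).symm
        have := card_le_univ (M x)
        omega
    _ = _ := by
        rw [sum_comm]
        refine sum_congr rfl fun i _ => ?_
        rw [← mul_sum]
        exact_mod_cast congrArg (fun t : ℕ => ((-1 : R) ^ (i - 1) * (l + i - 1).choose l * t))
          (sum_card_filter_subset_eq_sum_choose Ω M (l + i)).symm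

theorem subset_compl_biUnion_iff {ι α : Type*} [Fintype α] [DecidableEq α] (t : Finset ι)
    (f : ι → Finset α) (J : Finset α) : J ⊆ (t.biUnion f)ᶜ ↔ ∀ i ∈ t, f i ⊆ Jᶜ := by
  rw [le_compl_comm, ← biUnion_subset]

section Tuples

variable {ι α : Type*} [Fintype ι] [DecidableEq ι] [Fintype α] [DecidableEq α]

theorem card_filter_forall_card_eq_and_subset (s : ℕ) (t : Finset α) :
    #{f : ι → Finset α | ∀ i, #(f i) = s ∧ f i ⊆ t} = (#t).choose s ^ Fintype.card ι := by
  have : ({f : ι → Finset α | ∀ i, #(f i) = s ∧ f i ⊆ t} : Finset (ι → Finset α)) =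
      Fintype.piFinset fun _ => t.powersetCard s := by
    ext f
    simp [mem_powersetCard, and_comm]
  rw [this, Fintype.card_piFinset, prod_const, card_powersetCard, card_univ]

theorem card_filter_subset_compl_biUnion (s : ℕ) (J : Finset α) :
    #{f ∈ ({f | ∀ i, #(f i) = s} : Finset (ι → Finset α)) | J ⊆ (univ.biUnion f)ᶜ} =
      (Fintype.card α - #J).choose s ^ Fintype.card ι := by
  rw [← card_compl, ← card_filter_forall_card_eq_and_subset, filter_filter]
  simp only [subset_compl_biUnion_iff, mem_univ, true_implies, forall_and]

theorem card_filter_lt_card_compl_biUnion {R : Type*} [CommRing R] (s l : ℕ) :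
    (#{f ∈ ({f | ∀ i, #(f i) = s} : Finset (ι → Finset α)) | l < #(univ.biUnion f)ᶜ} : R) =
      ∑ i ∈ Icc 1 (Fintype.card α - l), (-1 : R) ^ (i - 1) * (l + i - 1).choose l *
        (Fintype.card α).choose (l + i) * (Fintype.card α - l - i).choose s ^ Fintype.card ι := by
  rw [card_filter_lt_card_eq_sum]
  refine sum_congr rfl fun i _ => ?_
  rw [sum_congr rfl fun J hJ => by
      rw [card_filter_subset_compl_biUnion, (mem_powersetCard.1 hJ).2],
    sum_const, card_powersetCard, card_univ, Nat.sub_sub]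
  push_cast
  ring

theorem card_filter_le_card_biUnion_div_card {s : ℕ} (l : ℕ) (hs : s ≤ Fintype.card α) :
    (#{f : ι → Finset α | (∀ i, #(f i) = s) ∧ Fintype.card α - l ≤ #(univ.biUnion f)} : ℝ) /
        #{f : ι → Finset α | ∀ i, #(f i) = s} =
      1 - ∑ i ∈ Icc 1 (Fintype.card α - l), (-1 : ℝ) ^ (i - 1) * (l + i - 1).choose l *
        (Fintype.card α).choose (l + i) *
          ((Fintype.card α - l - i).choose s / (Fintype.card α).choose s : ℝ) ^ Fintype.card ι := by
  set Ω : Finset (ι → Finset α) := {f | ∀ i, #(f i) = s}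
  have hΩ : #Ω = (Fintype.card α).choose s ^ Fintype.card ι := by
    simpa using card_filter_forall_card_eq_and_subset (ι := ι) s (univ : Finset α)
  have hbad : {f ∈ Ω | l < #(univ.biUnion f)ᶜ} =
      {f ∈ Ω | ¬ Fintype.card α - l ≤ #(univ.biUnion f)} :=
    filter_congr fun f _ => by rw [card_compl]; omega
  have hgood : (#{f ∈ Ω | Fintype.card α - l ≤ #(univ.biUnion f)} : ℝ) =
      #Ω - #{f ∈ Ω | l < #(univ.biUnion f)ᶜ} := by
    rw [hbad, eq_sub_iff_add_eq, ← Nat.cast_add, card_filter_add_card_filter_not]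
  have hchoose : ((Fintype.card α).choose s : ℝ) ≠ 0 := by exact_mod_cast (Nat.choose_pos hs).ne'
  rw [← filter_filter, hgood, card_filter_lt_card_compl_biUnion, hΩ]
  simp_rw [div_pow, ← mul_div_assoc, ← sum_div]
  push_cast
  field_simp

end Tuples

theorem stmt7_general {α : Type*} [Fintype α] [DecidableEq α]
    (n s c lam : ℕ) (hcard : Fintype.card α = n)
    (hsn : s ≤ n) :
    ((((Finset.univ : Finset (Fin c → Finset α)).filter
        (fun f => (∀ i, (f i).card = s) ∧
          n - lam ≤ ((Finset.univ : Finset (Fin c)).biUnion f).card)).card : ℝ) /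
      (((Finset.univ : Finset (Fin c → Finset α)).filter
        (fun f => ∀ i, (f i).card = s)).card : ℝ)) =
    1 - ∑ i ∈ Finset.Icc 1 (n - lam),
      (-1 : ℝ) ^ (i - 1) * ((lam + i - 1).choose lam : ℝ) * (n.choose (lam + i) : ℝ) *
        (((n - lam - i).choose s : ℝ) / (n.choose s : ℝ)) ^ c := by
  subst hcard
  have := card_filter_le_card_biUnion_div_card (ι := Fin c) lam hsn
  rw [Fintype.card_fin] at this
  -- the statement decides `∀ i : Fin c, _` by `Nat.decidableForallFin`, not the `Fintype` instance
  convert this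

/-- Euler's formula (coupon collector's problem with group drawings):
if `c` players each independently draw a uniformly random `s`-element subset of
an `n`-element set (with `0 < s ≤ n`, `lam ≤ n`), then the probability that
their union has at least `n − lam` elements equals
`1 − Σ_{i=1}^{n−lam} (−1)^{i−1} C(lam+i−1, lam) C(n, lam+i) (C(n−lam−i, s)/C(n, s))^c`.
The probability is expressed as the ratio of the number of favourable `c`-tuples
of `s`-element subsets to the total number of `c`-tuples of `s`-element subsets. -/
theorem stmt7 {α : Type*} [Fintype α] [DecidableEq α]
    (n s c lam : ℕ) (hcard : Fintype.card α = n)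
    (hs : 0 < s) (hsn : s ≤ n) (hlam : lam ≤ n) :
    ((((Finset.univ : Finset (Fin c → Finset α)).filter
        (fun f => (∀ i, (f i).card = s) ∧
          n - lam ≤ ((Finset.univ : Finset (Fin c)).biUnion f).card)).card : ℝ) /
      (((Finset.univ : Finset (Fin c → Finset α)).filter
        (fun f => ∀ i, (f i).card = s)).card : ℝ)) =
    1 - ∑ i ∈ Finset.Icc 1 (n - lam),
      (-1 : ℝ) ^ (i - 1) * ((lam + i - 1).choose lam : ℝ) * (n.choose (lam + i) : ℝ) *
        (((n - lam - i).choose s : ℝ) / (n.choose s : ℝ)) ^ c :=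
  stmt7_general n s c lam hcard hsn
end
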